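/- Let p ∈ A be a projection and x, y ∈ S_p(X). Then x·⟨x,z⟩ = y·⟨y,z⟩ for all z ∈ X (i.e. the rank-one projections θ_{x,x} and θ_{y,y} coincide) if and only if there exists u ∈ A with u*u = uu* = p and y = x·u. -/

import Mathlib

/-! The witness is `u = ⟨x,y⟩`. Evaluating `θ_{x,x} = θ_{y,y}` at `y` and at `x` gives
`u*u = ⟨y, y·⟨y,y⟩⟩ = p² = p`, symmetrically `uu* = p`, and `x·u = y·p = y`, since elements of
`S_p(X)` are fixed by `p`. Conversely `(x·u)·⟨x·u, z⟩ = x·(uu*)·⟨x,z⟩ = (x·p)·⟨x,z⟩ = x·⟨x,z⟩`. -/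

/-- A right Hilbert C*-module structure on `X` over the C*-algebra `A`:
`X` is a right `A`-module with an `A`-valued inner product satisfying
`⟨x,y⟩* = ⟨y,x⟩`, `⟨x, y·a⟩ = ⟨x,y⟩·a`, `⟨x,x⟩ ≥ 0`, and the norm of `X`
satisfies `‖x‖² = ‖⟨x,x⟩‖` (so completeness of `X` is completeness for this norm). -/
structure CStarModuleStr (A X : Type*) [NormedRing A] [StarRing A] [CStarRing A]
    [PartialOrder A] [StarOrderedRing A] [NormedAddCommGroup X] where
  smul : X → A → X
  inner : X → X → A
  add_smul : ∀ x y a, smul (x + y) a = smul x a + smul y a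
  smul_add : ∀ x a b, smul x (a + b) = smul x a + smul x b
  smul_mul : ∀ x a b, smul (smul x a) b = smul x (a * b)
  inner_add_left : ∀ x y z, inner (x + y) z = inner x z + inner y z
  inner_add_right : ∀ x y z, inner x (y + z) = inner x y + inner x z
  star_inner : ∀ x y, star (inner x y) = inner y x
  inner_smul_right : ∀ x y a, inner x (smul y a) = inner x y * a
  inner_self_nonneg : ∀ x, 0 ≤ inner x x
  norm_sq_eq : ∀ x, ‖x‖ ^ 2 = ‖inner x x‖

namespace CStarModuleStr

variable {A X : Type*} [NormedRing A] [StarRing A] [CStarRing A]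
  [PartialOrder A] [StarOrderedRing A] [NormedAddCommGroup X] (M : CStarModuleStr A X)

theorem inner_sub_left (w w' z : X) :
    M.inner (w - w') z = M.inner w z - M.inner w' z :=
  eq_sub_of_add_eq (by rw [← M.inner_add_left, sub_add_cancel])

theorem inner_sub_right (w w' z : X) :
    M.inner z (w - w') = M.inner z w - M.inner z w' :=
  eq_sub_of_add_eq (by rw [← M.inner_add_right, sub_add_cancel])

theorem inner_smul_left (x y : X) (a : A) :
    M.inner (M.smul x a) y = star a * M.inner x y := by
  rw [← M.star_inner, M.inner_smul_right, star_mul, M.star_inner]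

theorem eq_of_inner_sub_self_eq_zero {w w' : X} (h : M.inner (w - w') (w - w') = 0) :
    w = w' := by
  have hnorm : ‖w - w'‖ ^ 2 = 0 := by rw [M.norm_sq_eq, h, norm_zero]
  rwa [sq_eq_zero_iff, norm_eq_zero, sub_eq_zero] at hnorm

/-- `⟨w - w·p, w - w·p⟩ = p - p² - p² + p³ = 0`, where `p` is self-adjoint as an inner square. -/
theorem smul_eq_self_of_inner_self_eq {w : X} {p : A} (hw : M.inner w w = p) (hp : p * p = p) :
    M.smul w p = w := by
  have hps : star p = p := by rw [← hw, M.star_inner]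
  refine (M.eq_of_inner_sub_self_eq_zero ?_).symm
  simp only [inner_sub_left, inner_sub_right, inner_smul_left, inner_smul_right, hw, hps,
    hp, sub_self, zero_mul]

theorem star_inner_mul_inner_of_smul_inner_eq {x y : X} {p : A}
    (h : ∀ z, M.smul x (M.inner x z) = M.smul y (M.inner y z))
    (hy : M.inner y y = p) (hp : p * p = p) :
    star (M.inner x y) * M.inner x y = p := by
  rw [M.star_inner, ← M.inner_smul_right, h y, M.inner_smul_right, hy, hp]

theorem smul_inner_smul_eq_of_mul_star_eq {x : X} {p u : A}
    (hx : M.inner x x = p) (hp : p * p = p) (hu : u * star u = p) (z : X) :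
    M.smul (M.smul x u) (M.inner (M.smul x u) z) = M.smul x (M.inner x z) := by
  rw [M.smul_mul, M.inner_smul_left, ← mul_assoc, hu, ← M.smul_mul,
    M.smul_eq_self_of_inner_self_eq hx hp]

end CStarModuleStr

variable {A X : Type*} [NormedRing A] [StarRing A] [CStarRing A]
  [PartialOrder A] [StarOrderedRing A] [CompleteSpace A]
  [NormedAddCommGroup X] [CompleteSpace X]

theorem theta_eq_iff_exists_unitary_general (M : CStarModuleStr A X) (p : A)
    (hp : p * p = p) (x y : X)
    (hx : M.inner x x = p) (hy : M.inner y y = p) :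
    (∀ z : X, M.smul x (M.inner x z) = M.smul y (M.inner y z)) ↔
      ∃ u : A, star u * u = p ∧ u * star u = p ∧ y = M.smul x u := by
  constructor
  · intro h
    have hxy : star (M.inner y x) * M.inner y x = p :=
      M.star_inner_mul_inner_of_smul_inner_eq (fun z => (h z).symm) hx hp
    refine ⟨M.inner x y, M.star_inner_mul_inner_of_smul_inner_eq h hy hp, ?_, ?_⟩
    · rwa [M.star_inner, ← M.star_inner y x]
    · rw [h y, hy, M.smul_eq_self_of_inner_self_eq hy hp]
  · rintro ⟨u, -, hu, rfl⟩ z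
    exact (M.smul_inner_smul_eq_of_mul_star_eq hx hp hu z).symm

/-- For `x, y ∈ S_p(X)`, the rank-one projections `θ_{x,x}` and `θ_{y,y}` coincide
(`x·⟨x,z⟩ = y·⟨y,z⟩` for all `z`) if and only if `y = x·u` for some unitary `u` of
the corner algebra `pAp` (i.e. `u*u = uu* = p`). -/
theorem theta_eq_iff_exists_unitary (M : CStarModuleStr A X) (p : A)
    (hp : p * p = p) (hps : star p = p) (x y : X)
    (hx : M.inner x x = p) (hy : M.inner y y = p) :
    (∀ z : X, M.smul x (M.inner x z) = M.smul y (M.inner y z)) ↔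
      ∃ u : A, star u * u = p ∧ u * star u = p ∧ y = M.smul x u :=
  theta_eq_iff_exists_unitary_general M p hp x y hx hy
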